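/- arXiv:2512.10994 — 4 statements merged into one kernel-verified Lean document; each statement's English description precedes it below -/
import Mathlib

section
/- Let W ∈ ℝ^{m×m} be row-stochastic with nonnegative entries and let L̄_W = (1/2)(I_m + Diag(Wᵀe)) − (1/2)(W + Wᵀ). Then L̄_W is symmetric and positive semidefinite. -/
open Matrix

/-- The effective graph Laplacian `L̄_W = (1/2)(I + Diag(Wᵀ e)) - (1/2)(W + Wᵀ)`. -/
noncomputable def effGraphLaplacian {m : ℕ} (W : Matrix (Fin m) (Fin m) ℝ) :
    Matrix (Fin m) (Fin m) ℝ :=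
  (1 / 2 : ℝ) • (1 + Matrix.diagonal (Wᵀ *ᵥ fun _ => (1 : ℝ))) - (1 / 2 : ℝ) • (W + Wᵀ)

/-! For row-stochastic `W` the identity is `Diag(W e)`, so `2 L̄_W` is the weighted Laplacian
`Diag(A e) - A` of the symmetrised weights `A = W + Wᵀ`, whose quadratic form is
`∑ i j, W i j (x i - x j)²`, a sum of nonnegative terms when `W ≥ 0`. -/

namespace Matrix

variable {n R : Type*} [Fintype n] [DecidableEq n] [CommRing R]

def weightedLaplacian (A : Matrix n n R) : Matrix n n R :=
  diagonal (A *ᵥ 1) - A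

theorem weightedLaplacian_add (A B : Matrix n n R) :
    weightedLaplacian (A + B) = weightedLaplacian A + weightedLaplacian B := by
  rw [weightedLaplacian, weightedLaplacian, weightedLaplacian, ← add_sub_add_comm, diagonal_add,
    add_mulVec]
  rfl

theorem IsSymm.weightedLaplacian {A : Matrix n n R} (hA : A.IsSymm) :
    A.weightedLaplacian.IsSymm :=
  (isSymm_diagonal _).sub hA

theorem dotProduct_weightedLaplacian_mulVec (A : Matrix n n R) (x : n → R) :
    x ⬝ᵥ (weightedLaplacian A *ᵥ x) = ∑ i, ∑ j, A i j * x i * (x i - x j) := by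
  rw [weightedLaplacian, sub_mulVec, dotProduct_sub]
  simp only [dotProduct, mulVec_diagonal]
  simp only [mulVec, dotProduct, Pi.one_apply, mul_one, Finset.sum_mul, Finset.mul_sum,
    ← Finset.sum_sub_distrib]
  exact Finset.sum_congr rfl fun i _ => Finset.sum_congr rfl fun j _ => by ring

theorem dotProduct_weightedLaplacian_add_transpose_mulVec (W : Matrix n n R) (x : n → R) :
    x ⬝ᵥ (weightedLaplacian (W + Wᵀ) *ᵥ x) = ∑ i, ∑ j, W i j * (x i - x j) ^ 2 := by
  rw [weightedLaplacian_add, add_mulVec, dotProduct_add, dotProduct_weightedLaplacian_mulVec,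
    dotProduct_weightedLaplacian_mulVec,
    Finset.sum_comm (f := fun i j => Wᵀ i j * x i * (x i - x j)), ← Finset.sum_add_distrib]
  refine Finset.sum_congr rfl fun i _ => ?_
  rw [← Finset.sum_add_distrib]
  exact Finset.sum_congr rfl fun j _ => by rw [transpose_apply]; ring

variable [LinearOrder R] [IsStrictOrderedRing R] [StarRing R] [TrivialStar R]

theorem posSemidef_weightedLaplacian_add_transpose {W : Matrix n n R} (hW : ∀ i j, 0 ≤ W i j) :
    (W + Wᵀ).weightedLaplacian.PosSemidef := by
  refine .of_dotProduct_mulVec_nonneg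
    (isHermitian_iff_isSymm.mpr (isSymm_add_transpose_self W).weightedLaplacian) fun x => ?_
  rw [star_trivial, dotProduct_weightedLaplacian_add_transpose_mulVec]
  exact Finset.sum_nonneg fun i _ => Finset.sum_nonneg fun j _ => mul_nonneg (hW i j) (sq_nonneg _)

end Matrix

theorem effGraphLaplacian_eq_half_weightedLaplacian {m : ℕ} {W : Matrix (Fin m) (Fin m) ℝ}
    (hWrow : ∀ i, ∑ k, W i k = 1) :
    effGraphLaplacian W = (1 / 2 : ℝ) • (W + Wᵀ).weightedLaplacian := by
  have hWe : W *ᵥ 1 = 1 := funext fun i => by simp [mulVec, dotProduct, hWrow i]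
  rw [effGraphLaplacian, weightedLaplacian, add_mulVec, hWe, ← smul_sub, ← diagonal_one,
    diagonal_add]
  rfl

/-- For a row-stochastic nonnegative `W`, the effective graph Laplacian `L̄_W` is symmetric
and positive semidefinite. -/
theorem effGraphLaplacian_isSymm_posSemidef (m : ℕ)
    (W : Matrix (Fin m) (Fin m) ℝ) (hW0 : ∀ i k, 0 ≤ W i k)
    (hWrow : ∀ i, ∑ k, W i k = 1) :
    (effGraphLaplacian W).IsSymm ∧ (effGraphLaplacian W).PosSemidef := by
  rw [effGraphLaplacian_eq_half_weightedLaplacian hWrow]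
  exact ⟨(isSymm_add_transpose_self W).weightedLaplacian.smul _,
    (posSemidef_weightedLaplacian_add_transpose hW0).smul (by norm_num)⟩
end

section
/- Let K ∈ ℝ^{m×m} be symmetric positive semidefinite, λ > 0, ω ≥ 0, and L ∈ ℝ^{m×m} symmetric positive semidefinite. Then the matrices K, K² + λK + ωKLK, and (K² + λK + ωKLK)⁺ (Moore–Penrose pseudoinverse) all have the same null space, and rank(K² + λK + ωKLK) = rank(K). -/
open Matrix

/-- `B` is the Moore–Penrose pseudoinverse of `A` (the four Penrose conditions). -/
def IsMoorePenrose {m : ℕ} (A B : Matrix (Fin m) (Fin m) ℝ) : Prop :=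
  A * B * A = A ∧ B * A * B = B ∧ (A * B)ᵀ = A * B ∧ (B * A)ᵀ = B * A

/-!
The kernel of a sum of positive semidefinite matrices is the intersection of their kernels, since
`x ↦ xᴴ A x` is nonnegative and vanishes exactly on `ker A`. The summands `K²`, `λK`, `ωKLK` of
`M = K² + λK + ωKLK` have kernels `ker K`, `ker K` and a superspace of `ker K`, so `ker M = ker K`,
and rank–nullity gives `rank M = rank K`. For any Moore–Penrose inverse `B` of `A`, the identities
`B = B Bᵀ Aᵀ` and `Aᵀ = Aᵀ A B` give `ker B = ker Aᵀ`, which is `ker M` as `M` is symmetric.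
-/

namespace Matrix

open scoped ComplexOrder

theorem PosSemidef.ker_mulVecLin_add {n 𝕜 : Type*} [Fintype n] [RCLike 𝕜]
    {A B : Matrix n n 𝕜} (hA : A.PosSemidef) (hB : B.PosSemidef) :
    LinearMap.ker (A + B).mulVecLin = LinearMap.ker A.mulVecLin ⊓ LinearMap.ker B.mulVecLin := by
  ext x
  rw [Submodule.mem_inf, LinearMap.mem_ker, LinearMap.mem_ker, LinearMap.mem_ker, mulVecLin_apply,
    mulVecLin_apply, mulVecLin_apply, ← (hA.add hB).dotProduct_mulVec_zero_iff,
    ← hA.dotProduct_mulVec_zero_iff, ← hB.dotProduct_mulVec_zero_iff, add_mulVec, dotProduct_add]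
  exact add_eq_zero_iff_of_nonneg (hA.dotProduct_mulVec_nonneg x) (hB.dotProduct_mulVec_nonneg x)

theorem mulVecLin_smul {m n R : Type*} [Fintype n] [CommSemiring R] (c : R) (A : Matrix m n R) :
    (c • A).mulVecLin = c • A.mulVecLin :=
  map_smul (mulVecBilin R R) c A

theorem rank_eq_rank_of_ker_mulVecLin_eq {m n R : Type*} [Fintype n] [Field R]
    {A B : Matrix m n R} (h : LinearMap.ker A.mulVecLin = LinearMap.ker B.mulVecLin) :
    A.rank = B.rank := by
  have hA := LinearMap.finrank_range_add_finrank_ker A.mulVecLin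
  have hB := LinearMap.finrank_range_add_finrank_ker B.mulVecLin
  rw [h] at hA
  exact Nat.add_right_cancel (hA.trans hB.symm)

theorem PosSemidef.ker_mulVecLin_mul_self_add_smul_add_smul {n : Type*} [Fintype n]
    {K L : Matrix n n ℝ} (hK : K.PosSemidef) (hL : L.PosSemidef) {lam om : ℝ} (hlam : 0 < lam)
    (hom : 0 ≤ om) :
    LinearMap.ker (K * K + lam • K + om • (K * L * K)).mulVecLin = LinearMap.ker K.mulVecLin := by
  have hKK : (K * K).PosSemidef := by
    simpa only [hK.1.eq] using posSemidef_conjTranspose_mul_self K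
  have hKLK : (K * L * K).PosSemidef := by
    simpa only [hK.1.eq] using hL.mul_mul_conjTranspose_same K
  have hKK_ker : LinearMap.ker (K * K).mulVecLin = LinearMap.ker K.mulVecLin := by
    simpa only [hK.1.eq] using ker_mulVecLin_conjTranspose_mul_self K
  have hKLK_ker : LinearMap.ker K.mulVecLin ≤ LinearMap.ker (om • (K * L * K)).mulVecLin := by
    rw [mulVecLin_smul, mulVecLin_mul, mulVecLin_mul]
    exact (LinearMap.ker_le_ker_comp _ _).trans (LinearMap.ker_le_ker_smul _ _)
  rw [(hKK.add (hK.smul hlam.le)).ker_mulVecLin_add (hKLK.smul hom),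
    hKK.ker_mulVecLin_add (hK.smul hlam.le), hKK_ker, mulVecLin_smul,
    LinearMap.ker_smul _ _ hlam.ne', inf_idem]
  exact inf_eq_left.mpr hKLK_ker

end Matrix

theorem IsMoorePenrose.ker_mulVecLin_eq {m : ℕ} {A B : Matrix (Fin m) (Fin m) ℝ}
    (h : IsMoorePenrose A B) : LinearMap.ker B.mulVecLin = LinearMap.ker Aᵀ.mulVecLin := by
  obtain ⟨hABA, hBAB, hAB, -⟩ := h
  have hB : B = B * Bᵀ * Aᵀ := by
    rw [mul_assoc, ← transpose_mul, hAB, ← mul_assoc, hBAB]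
  have hA : Aᵀ = Aᵀ * A * B := by
    rw [mul_assoc, ← hAB, ← transpose_mul, hABA]
  apply le_antisymm
  · rw [hA, mulVecLin_mul]
    exact LinearMap.ker_le_ker_comp _ _
  · rw [hB, mulVecLin_mul]
    exact LinearMap.ker_le_ker_comp _ _

/-- For `K` symmetric PSD, `λ > 0`, `ω ≥ 0` and `L` symmetric PSD, the matrices `K`,
`M = K² + λK + ωKLK` and `M⁺` all have the same null space, and `rank M = rank K`. -/
theorem same_nullspace_and_rank (m : ℕ) (K L : Matrix (Fin m) (Fin m) ℝ)
    (hK : K.PosSemidef) (hL : L.PosSemidef) (lam om : ℝ) (hlam : 0 < lam) (hom : 0 ≤ om)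
    (B : Matrix (Fin m) (Fin m) ℝ)
    (hB : IsMoorePenrose (K * K + lam • K + om • (K * L * K)) B) :
    LinearMap.ker (Matrix.mulVecLin K)
        = LinearMap.ker (Matrix.mulVecLin (K * K + lam • K + om • (K * L * K)))
      ∧ LinearMap.ker (Matrix.mulVecLin (K * K + lam • K + om • (K * L * K)))
        = LinearMap.ker (Matrix.mulVecLin B)
      ∧ (K * K + lam • K + om • (K * L * K)).rank = K.rank := by
  have hker := hK.ker_mulVecLin_mul_self_add_smul_add_smul hL hlam hom
  have hsymm : (K * K + lam • K + om • (K * L * K))ᵀ = K * K + lam • K + om • (K * L * K) := by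
    have hKt : Kᵀ = K := (isHermitian_iff_isSymm.mp hK.1).eq
    have hLt : Lᵀ = L := (isHermitian_iff_isSymm.mp hL.1).eq
    simp only [transpose_add, transpose_smul, transpose_mul, hKt, hLt, mul_assoc]
  refine ⟨hker.symm, ?_, rank_eq_rank_of_ker_mulVecLin_eq hker⟩
  rw [hB.ker_mulVecLin_eq, hsymm]
end

section
/- Let K ∈ ℝ^{m×m} be symmetric positive semidefinite with r = rank(K) ≥ 1, λ ≥ 0, ω ≥ 0, and L symmetric positive semidefinite. Then the operator norm of the pseudoinverse satisfies ‖(K² + λK + ωKLK)⁺‖_op ≤ 1/Λ_r(K)², where Λ_r(K) is the smallest strictly positive eigenvalue of K. -/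
open Matrix

/-!
Transport everything to operators on Euclidean space and put `x = B y`. The Penrose identities
give `B = M Bᵀ B`, and `M = K (K + λ + ω L K)`, so `x` lies in the range of `K`; there `K` is
bounded below by its smallest positive eigenvalue, hence `Λ² ‖x‖² ≤ ‖K x‖²`. Since
`K² ≤ M` in the Loewner order and `M B` is an orthogonal projection,
`‖K x‖² ≤ ⟪x, M x⟫ = ⟪x, (M B) y⟫ ≤ ‖x‖ ‖y‖`, and therefore `Λ² ‖x‖ ≤ ‖y‖`.
-/

open Module.End RCLike
open scoped InnerProductSpace ComplexOrder

section Penrose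

variable {R : Type*} [Semigroup R] [StarMul R] {m b : R}

theorem IsSelfAdjoint.eq_mul_star_mul_self_of_penrose (hm : IsSelfAdjoint m)
    (hbmb : b * m * b = b) (hbm : IsSelfAdjoint (b * m)) : b = m * (star b * b) :=
  calc b = star (b * m) * b := by rw [hbm.star_eq, hbmb]
    _ = m * (star b * b) := by rw [star_mul, hm.star_eq, mul_assoc]

theorem isStarProjection_mul_of_penrose (hmbm : m * b * m = m) (hmb : IsSelfAdjoint (m * b)) :
    IsStarProjection (m * b) where
  isIdempotentElem := by rw [IsIdempotentElem, ← mul_assoc, hmbm]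
  isSelfAdjoint := hmb

end Penrose

variable {𝕜 E : Type*} [RCLike 𝕜] [NormedAddCommGroup E] [InnerProductSpace 𝕜 E]

theorem LinearMap.IsPositive.mul_norm_le_norm_apply_of_mem_range [FiniteDimensional 𝕜 E]
    {T : E →ₗ[𝕜] E} (hT : T.IsPositive) {Λ : ℝ} (hΛ : 0 ≤ Λ)
    (hmin : ∀ μ : ℝ, HasEigenvalue T μ → 0 < μ → Λ ≤ μ) {x : E} (hx : x ∈ range T) :
    Λ * ‖x‖ ≤ ‖T x‖ := by
  obtain ⟨z, rfl⟩ := hx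
  set b := hT.isSymmetric.eigenvectorBasis rfl
  set μ := hT.isSymmetric.eigenvalues rfl
  have inner_apply : ∀ w i, ⟪b i, T w⟫_𝕜 = μ i * ⟪b i, w⟫_𝕜 := fun w i => by
    rw [← hT.isSymmetric, hT.isSymmetric.apply_eigenvectorBasis, inner_smul_left,
      conj_ofReal]
  -- The coordinates of `T z` along the kernel of `T` vanish; the other eigenvalues are `≥ Λ`.
  have h_coeff : ∀ i, (Λ * ‖⟪b i, T z⟫_𝕜‖) ^ 2 ≤ ‖⟪b i, T (T z)⟫_𝕜‖ ^ 2 := fun i => by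
    rw [inner_apply (T z), norm_mul, norm_ofReal, mul_pow, mul_pow]
    rcases (hT.nonneg_eigenvalues rfl i : 0 ≤ μ i).eq_or_lt with h0 | hpos
    · simp [inner_apply z, show μ i = 0 from h0.symm]
    · have := hmin _ (hT.isSymmetric.hasEigenvalue_eigenvalues rfl i) hpos
      gcongr
      rwa [abs_of_pos hpos]
  rw [← pow_le_pow_iff_left₀ (by positivity) (by positivity) two_ne_zero, mul_pow,
    ← b.sum_sq_norm_inner_right, ← b.sum_sq_norm_inner_right, Finset.mul_sum]
  exact Finset.sum_le_sum fun i _ => by simpa only [mul_pow] using h_coeff i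

namespace ContinuousLinearMap

variable [CompleteSpace E]

theorem norm_apply_sq_le_re_inner_of_star_mul_self_le {k m : E →L[𝕜] E} (h : star k * k ≤ m)
    (x : E) : ‖k x‖ ^ 2 ≤ re ⟪x, m x⟫_𝕜 := by
  have := ((le_def _ _).mp h).re_inner_nonneg_right x
  rw [_root_.sub_apply, inner_sub_right, map_sub, sub_nonneg] at this
  rwa [apply_norm_sq_eq_inner_adjoint_right]

theorem IsPositive.mul_self_le_mul_self_add {k l : E →L[𝕜] E} (hk : k.IsPositive)
    (hl : l.IsPositive) {a c : 𝕜} (ha : 0 ≤ a) (hc : 0 ≤ c) :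
    k * k ≤ k * k + a • k + c • (k * l * k) := by
  rw [le_def, add_assoc, add_sub_cancel_left]
  refine (hk.smul_of_nonneg ha).add (IsPositive.smul_of_nonneg ?_ hc)
  simpa only [hk.isSelfAdjoint.adjoint_eq, mul_def, comp_assoc] using hl.conj_adjoint k

theorem norm_le_one_div_sq_of_penrose [FiniteDimensional 𝕜 E] {k m b : E →L[𝕜] E}
    (hk : k.IsPositive) {Λ : ℝ} (hΛ : 0 < Λ)
    (hmin : ∀ μ : ℝ, HasEigenvalue (k : E →ₗ[𝕜] E) μ → 0 < μ → Λ ≤ μ) (hkm : k * k ≤ m)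
    (hrange : LinearMap.range (m : E →ₗ[𝕜] E) ≤ LinearMap.range (k : E →ₗ[𝕜] E))
    (hmbm : m * b * m = m) (hbmb : b * m * b = b) (hmb : IsSelfAdjoint (m * b))
    (hbm : IsSelfAdjoint (b * m)) :
    ‖b‖ ≤ 1 / Λ ^ 2 := by
  have hkk : star k * k ≤ m := by rwa [hk.isSelfAdjoint.star_eq]
  have hm : IsSelfAdjoint m := by
    simpa only [sub_add_cancel] using
      ((le_def _ _).mp hkk).isSelfAdjoint.add (IsSelfAdjoint.star_mul_self k)
  have hb : b = m * (star b * b) := hm.eq_mul_star_mul_self_of_penrose hbmb hbm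
  refine opNorm_le_bound _ (by positivity) fun y => ?_
  have h_range : b y ∈ LinearMap.range (k : E →ₗ[𝕜] E) :=
    hrange ⟨(star b * b) y, (DFunLike.congr_fun hb y).symm⟩
  have h_spec : Λ * ‖b y‖ ≤ ‖k (b y)‖ :=
    ((isPositive_toLinearMap_iff k).mpr hk).mul_norm_le_norm_apply_of_mem_range hΛ.le hmin
      h_range
  have h_proj : ‖(m * b) y‖ ≤ ‖y‖ :=
    (le_opNorm _ y).trans
      (mul_le_of_le_one_left (norm_nonneg y) (isStarProjection_mul_of_penrose hmbm hmb).norm_le)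
  have h_quad : ‖k (b y)‖ ^ 2 ≤ ‖b y‖ * ‖y‖ := calc
    ‖k (b y)‖ ^ 2 ≤ re ⟪b y, m (b y)⟫_𝕜 := norm_apply_sq_le_re_inner_of_star_mul_self_le hkk _
    _ ≤ ‖b y‖ * ‖(m * b) y‖ := re_inner_le_norm _ _
    _ ≤ ‖b y‖ * ‖y‖ := by gcongr
  have h_sq : (Λ * ‖b y‖) ^ 2 ≤ ‖b y‖ * ‖y‖ :=
    (pow_le_pow_left₀ (by positivity) h_spec 2).trans h_quad
  rcases (norm_nonneg (b y)).eq_or_lt with h0 | hpos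
  · rw [← h0]
    positivity
  · rw [one_div, inv_mul_eq_div, le_div_iff₀ (by positivity)]
    exact le_of_mul_le_mul_right (by linarith) hpos

end ContinuousLinearMap

namespace Matrix

variable {n : Type*} [Fintype n] [DecidableEq n]

theorem PosSemidef.isPositive_toEuclideanCLM {A : Matrix n n 𝕜} (hA : A.PosSemidef) :
    (toEuclideanCLM (𝕜 := 𝕜) A).IsPositive := by
  rw [← ContinuousLinearMap.isPositive_toLinearMap_iff, coe_toEuclideanCLM_eq_toEuclideanLin]
  exact isPositive_toEuclideanLin_iff.mpr hA

theorem IsSymm.isSelfAdjoint_toEuclideanCLM {A : Matrix n n ℝ} (hA : A.IsSymm) :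
    IsSelfAdjoint (toEuclideanCLM (𝕜 := ℝ) A) :=
  (isHermitian_iff_isSelfAdjoint.mp (isHermitian_iff_isSymm.mpr hA)).map _

theorem hasEigenvalue_toEuclideanLin_iff {A : Matrix n n 𝕜} {μ : 𝕜} :
    HasEigenvalue (toEuclideanLin A) μ ↔ HasEigenvalue A.mulVecLin μ := by
  rw [hasEigenvalue_iff_mem_spectrum, hasEigenvalue_iff_mem_spectrum, ← toLin'_apply',
    spectrum_toLin']
  exact Set.ext_iff.mp (spectrum_toLpLin (A := A) 2) μ

theorem range_toEuclideanCLM_mul_le (A C : Matrix n n 𝕜) :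
    LinearMap.range
        (toEuclideanCLM (𝕜 := 𝕜) (A * C) : EuclideanSpace 𝕜 n →ₗ[𝕜] EuclideanSpace 𝕜 n) ≤
      LinearMap.range (toEuclideanCLM (𝕜 := 𝕜) A : EuclideanSpace 𝕜 n →ₗ[𝕜] EuclideanSpace 𝕜 n) := by
  rintro _ ⟨x, rfl⟩
  exact ⟨toEuclideanCLM (𝕜 := 𝕜) C x, by rw [map_mul]; rfl⟩

end Matrix

theorem pseudoinverse_opNorm_le_general (m : ℕ) (K L : Matrix (Fin m) (Fin m) ℝ)
    (hK : K.PosSemidef) (hL : L.PosSemidef)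
    (lam om : ℝ) (hlam : 0 ≤ lam) (hom : 0 ≤ om)
    (Λ : ℝ) (hΛpos : 0 < Λ)
    (hΛmin : ∀ μ : ℝ, Module.End.HasEigenvalue (Matrix.mulVecLin K) μ → 0 < μ → Λ ≤ μ)
    (B : Matrix (Fin m) (Fin m) ℝ)
    (hB : IsMoorePenrose (K * K + lam • K + om • (K * L * K)) B) :
    ‖Matrix.toEuclideanCLM (𝕜 := ℝ) B‖ ≤ 1 / Λ ^ 2 := by
  obtain ⟨hMBM, hBMB, hMB, hBM⟩ := hB
  have hk := hK.isPositive_toEuclideanCLM (𝕜 := ℝ)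
  have hkm := hk.mul_self_le_mul_self_add (a := lam) (c := om)
    (hL.isPositive_toEuclideanCLM (𝕜 := ℝ)) (ofReal_nonneg.mpr hlam) (ofReal_nonneg.mpr hom)
  have h_factor : K * K + lam • K + om • (K * L * K) = K * (K + lam • 1 + om • (L * K)) := by
    simp only [Matrix.mul_add, Matrix.mul_smul, Matrix.mul_one, Matrix.mul_assoc]
  refine ContinuousLinearMap.norm_le_one_div_sq_of_penrose hk hΛpos
    (fun μ hμ => hΛmin μ (hasEigenvalue_toEuclideanLin_iff.mp hμ))
    (by simpa only [map_add, map_mul, map_smul] using hkm)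
    (h_factor ▸ range_toEuclideanCLM_mul_le _ _) ?_ ?_ ?_ ?_
  · rw [← map_mul, ← map_mul, hMBM]
  · rw [← map_mul, ← map_mul, hBMB]
  · rw [← map_mul]
    exact IsSymm.isSelfAdjoint_toEuclideanCLM hMB
  · rw [← map_mul]
    exact IsSymm.isSelfAdjoint_toEuclideanCLM hBM

/-- For `K` symmetric PSD with rank at least 1, `λ ≥ 0`, `ω ≥ 0` and `L` symmetric PSD, the
operator norm of the pseudoinverse of `M = K² + λK + ωKLK` is at most `1/Λ_r(K)²`, where
`Λ_r(K)` is the smallest strictly positive eigenvalue of `K`. -/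
theorem pseudoinverse_opNorm_le (m : ℕ) (K L : Matrix (Fin m) (Fin m) ℝ)
    (hK : K.PosSemidef) (hL : L.PosSemidef) (hr : 1 ≤ K.rank)
    (lam om : ℝ) (hlam : 0 ≤ lam) (hom : 0 ≤ om)
    (Λ : ℝ) (hΛpos : 0 < Λ)
    (hΛeig : Module.End.HasEigenvalue (Matrix.mulVecLin K) Λ)
    (hΛmin : ∀ μ : ℝ, Module.End.HasEigenvalue (Matrix.mulVecLin K) μ → 0 < μ → Λ ≤ μ)
    (B : Matrix (Fin m) (Fin m) ℝ)
    (hB : IsMoorePenrose (K * K + lam • K + om • (K * L * K)) B) :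
    ‖Matrix.toEuclideanCLM (𝕜 := ℝ) B‖ ≤ 1 / Λ ^ 2 :=
  pseudoinverse_opNorm_le_general m K L hK hL lam om hlam hom Λ hΛpos hΛmin B hB
end

section
/- Let K, L ∈ ℝ^{m×m} with K symmetric positive semidefinite and L symmetric positive semidefinite, λ > 0, ω ≥ 0, and Y ∈ ℝ^{m×d}. Then θ̂ = (1/√m)(K² + λK + ωKLK)⁺ K Y satisfies the normal equation (K² + λK + ωKLK) θ̂ = (1/√m) K Y. -/
open Matrix

/-! Writing `M = K² + λK + ωKLK`, a kernel vector `x` of `M` gives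
`0 = xᵀMx = ‖Kx‖² + λ xᵀKx + ω (Kx)ᵀL(Kx)`, a sum of nonnegative terms, so `xᵀKx = 0` and
`Kx = 0`. Hence `ker M ⊆ ker K`, i.e. (both being symmetric) `range K ⊆ range M`, and on
`range M` the product `M M⁺` is the identity since `M M⁺ M = M`. -/

namespace Matrix

section KernelInclusion

variable {R l m n p : Type*} [CommRing R] [Fintype n]

theorem mul_eq_zero_of_ker_le [Fintype p] {M : Matrix m n R} {K : Matrix l n R}
    (hker : ∀ x, M *ᵥ x = 0 → K *ᵥ x = 0) {X : Matrix n p R} (hX : M * X = 0) : K * X = 0 := by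
  refine ext_iff_mulVec.mpr fun v => ?_
  rw [← mulVec_mulVec, zero_mulVec]
  exact hker _ (by rw [mulVec_mulVec, hX, zero_mulVec])

theorem mul_mul_eq_of_ker_le [DecidableEq n] {M B K : Matrix n n R} (hM : Mᵀ = M) (hK : Kᵀ = K)
    (hMBM : M * B * M = M) (hker : ∀ x, M *ᵥ x = 0 → K *ᵥ x = 0) : M * B * K = K := by
  have hM_compl : M * (1 - Bᵀ * M) = 0 := by
    rw [mul_sub, mul_one, ← Matrix.mul_assoc, sub_eq_zero]
    simpa only [transpose_mul, hM, Matrix.mul_assoc] using congrArg transpose hMBM.symm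
  have hK_compl : K * (1 - Bᵀ * M) = 0 := mul_eq_zero_of_ker_le hker hM_compl
  rw [mul_sub, mul_one, sub_eq_zero] at hK_compl
  simpa only [transpose_mul, transpose_transpose, hM, hK, Matrix.mul_assoc] using
    congrArg transpose hK_compl.symm

end KernelInclusion

variable {n : Type*} [Fintype n]

theorem PosSemidef.mulVec_eq_zero_of_add_smul_mulVec_eq_zero {A B C : Matrix n n ℝ}
    (hA : A.PosSemidef) (hB : B.PosSemidef) (hC : C.PosSemidef) {lam om : ℝ} (hlam : 0 < lam)
    (hom : 0 ≤ om) {x : n → ℝ} (hx : (A + lam • B + om • C) *ᵥ x = 0) : B *ᵥ x = 0 := by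
  have hAx := hA.dotProduct_mulVec_nonneg x
  have hBx := hB.dotProduct_mulVec_nonneg x
  have hCx := hC.dotProduct_mulVec_nonneg x
  have hsum := congrArg (star x ⬝ᵥ ·) hx
  simp only [add_mulVec, smul_mulVec, dotProduct_add, dotProduct_smul, smul_eq_mul,
    dotProduct_zero] at hsum
  refine (hB.dotProduct_mulVec_zero_iff x).mp ?_
  nlinarith [mul_nonneg hom hCx]

theorem mulVec_eq_zero_of_regularized_mulVec_eq_zero {K L : Matrix n n ℝ} (hK : K.PosSemidef)
    (hL : L.PosSemidef) {lam om : ℝ} (hlam : 0 < lam) (hom : 0 ≤ om) {x : n → ℝ}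
    (hx : (K * K + lam • K + om • (K * L * K)) *ᵥ x = 0) : K *ᵥ x = 0 := by
  have hKK : (K * K).PosSemidef := by
    simpa only [hK.1.eq] using posSemidef_conjTranspose_mul_self K
  have hKLK : (K * L * K).PosSemidef := by
    simpa only [hK.1.eq] using hL.conjTranspose_mul_mul_same K
  exact hKK.mulVec_eq_zero_of_add_smul_mulVec_eq_zero hK hKLK hlam hom hx

end Matrix

theorem pseudoinverse_solves_normal_equation_general (m d : ℕ)
    (K L : Matrix (Fin m) (Fin m) ℝ) (hK : K.PosSemidef) (hL : L.PosSemidef)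
    (lam om : ℝ) (hlam : 0 < lam) (hom : 0 ≤ om)
    (Y : Matrix (Fin m) (Fin d) ℝ)
    (B : Matrix (Fin m) (Fin m) ℝ)
    (hB : IsMoorePenrose (K * K + lam • K + om • (K * L * K)) B) :
    (K * K + lam • K + om • (K * L * K)) * ((1 / Real.sqrt m) • (B * (K * Y)))
      = (1 / Real.sqrt m) • (K * Y) := by
  have hKt : Kᵀ = K := hK.1
  have hLt : Lᵀ = L := hL.1
  have hMt : (K * K + lam • K + om • (K * L * K))ᵀ = K * K + lam • K + om • (K * L * K) := by
    simp only [transpose_add, transpose_smul, transpose_mul, hKt, hLt, Matrix.mul_assoc]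
  have hMBK := mul_mul_eq_of_ker_le hMt hKt hB.1
    fun _ hx => mulVec_eq_zero_of_regularized_mulVec_eq_zero hK hL hlam hom hx
  rw [Matrix.mul_smul, ← Matrix.mul_assoc, ← Matrix.mul_assoc, hMBK]

/-- With `K, L` symmetric PSD, `λ > 0`, `ω ≥ 0`, `Y ∈ ℝ^{m×d}` and `m ≥ 1`, the matrix
`θ̂ = (1/√m) M⁺ K Y` (where `M = K² + λK + ωKLK`) satisfies the normal equation
`M θ̂ = (1/√m) K Y`. -/
theorem pseudoinverse_solves_normal_equation (m d : ℕ) (hm : 1 ≤ m)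
    (K L : Matrix (Fin m) (Fin m) ℝ) (hK : K.PosSemidef) (hL : L.PosSemidef)
    (lam om : ℝ) (hlam : 0 < lam) (hom : 0 ≤ om)
    (Y : Matrix (Fin m) (Fin d) ℝ)
    (B : Matrix (Fin m) (Fin m) ℝ)
    (hB : IsMoorePenrose (K * K + lam • K + om • (K * L * K)) B) :
    (K * K + lam • K + om • (K * L * K)) * ((1 / Real.sqrt m) • (B * (K * Y)))
      = (1 / Real.sqrt m) • (K * Y) :=
  pseudoinverse_solves_normal_equation_general m d K L hK hL lam om hlam hom Y B hB
end
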